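/- arXiv:1205.3264 — 2 statements merged into one kernel-verified Lean document; each statement's English description precedes it below -/
import Mathlib

section
/- Let E be a topological graph, n ≥ 1, and let x₁, …, xₙ, y₁, …, yₙ ∈ C_c(E¹) each have supp an s-section. Set x = x₁◇⋯◇xₙ and y = y₁◇⋯◇yₙ in C_c(Eⁿ), and let (ψ, π) be a Toeplitz representation of E in a C*-algebra B. Then for every h ∈ C_c(E⁰) such that h(v) = 0 for all v ∉ {s(μ) : μ ∈ Eⁿ, x(μ)y(μ) ≠ 0} and h(s(μ)) = conj(x(μ)) y(μ) whenever x(μ)y(μ) ≠ 0, one has π(h) = ψ(xₙ)* ⋯ ψ(x₁)* ψ(y₁) ⋯ ψ(yₙ). Moreover, if x = y as functions on Eⁿ, then ψ(x₁) ⋯ ψ(xₙ) = ψ(y₁) ⋯ ψ(yₙ). -/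
open scoped ZeroAtInfty CompactlySupported ComplexOrder

noncomputable section

namespace TopGraphPaper

variable {V G : Type*} [TopologicalSpace V] [TopologicalSpace G]

/-- The set `E⁰_fin` of vertices having a neighbourhood `N` with `r⁻¹(N)` compact. -/
def Efin (r : G → V) : Set V := {v | ∃ N ∈ nhds v, IsCompact (r ⁻¹' N)}

/-- The set `E⁰_sce = E⁰ \ closure (r(E¹))`. -/
def Esce (r : G → V) : Set V := (closure (Set.range r))ᶜ

/-- The set `E⁰_rg = E⁰_fin \ closure (E⁰_sce)`. -/
def Erg (r : G → V) : Set V := Efin r \ closure (Esce r)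

/-- `U ⊆ E¹` is an `s`-section if `s` restricted to `U` is a homeomorphism onto its image. -/
def IsSSection (s : G → V) (U : Set G) : Prop := Topology.IsEmbedding (U.restrict s)

/-- A complex-valued function is nonnegative if all its values are nonnegative reals. -/
def NonnegFn {α : Type*} (x : α → ℂ) : Prop := ∀ a, 0 ≤ x a

/-- The norm `‖x‖_{C₀(E⁰)} = sup_v √(Σ_{s e = v} |x e|²)` on `C_c(E¹)`. -/
def gnorm (s : G → V) (x : G → ℂ) : ℝ :=
  ⨆ v : V, Real.sqrt (∑' e : (s ⁻¹' {v} : Set G), ‖x (e : G)‖ ^ 2)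

variable {B : Type*} [NonUnitalCStarAlgebra B]

/-- A Toeplitz representation of the topological graph `(V, G, r, s)` in the C*-algebra `B`. -/
structure IsToeplitzRep (r s : G → V) (ψ : C_c(G, ℂ) →ₗ[ℂ] B)
    (π : C₀(V, ℂ) →⋆ₙₐ[ℂ] B) : Prop where
  act : ∀ (f : C₀(V, ℂ)) (x y : C_c(G, ℂ)), (∀ e, y e = f (r e) * x e) → ψ y = π f * ψ x
  inner : ∀ (x : C_c(G, ℂ)) (U : Set G), IsOpen U → IsSSection s U → tsupport ⇑x ⊆ U →
    ∀ g : C₀(V, ℂ), (∀ e, x e ≠ 0 → g (s e) = (‖x e‖ : ℂ) ^ 2) →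
      (∀ v, v ∉ s '' Function.support ⇑x → g v = 0) → π g = star (ψ x) * ψ x
  orth : ∀ (x y : C_c(G, ℂ)) (Ux Uy : Set G), IsOpen Ux → IsOpen Uy →
    IsSSection s Ux → IsSSection s Uy → Disjoint Ux Uy →
    tsupport ⇑x ⊆ Ux → tsupport ⇑y ⊆ Uy → star (ψ x) * ψ y = 0

/-- Covariance of a Toeplitz representation.  Here, for each `f` in the generating family `𝒢`,
the function `gN N` plays the role of `√(f_N)`, so that `f_N = (gN N)^2`. -/
def IsCovariant (r s : G → V) (ψ : C_c(G, ℂ) →ₗ[ℂ] B) (π : C₀(V, ℂ) →⋆ₙₐ[ℂ] B) : Prop :=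
  ∃ 𝒢 : Set C₀(V, ℂ),
    (∀ f ∈ 𝒢, HasCompactSupport ⇑f ∧ NonnegFn ⇑f ∧ tsupport ⇑f ⊆ Erg r) ∧
    closure ((NonUnitalStarAlgebra.adjoin ℂ 𝒢 : NonUnitalStarSubalgebra ℂ C₀(V, ℂ)) :
        Set C₀(V, ℂ)) = {f : C₀(V, ℂ) | ∀ v ∉ Erg r, f v = 0} ∧
    ∀ f ∈ 𝒢, ∃ (𝒩 : Finset (Set G)) (gN : Set G → C_c(G, ℂ)),
      (∀ N ∈ 𝒩, IsOpen N ∧ IsSSection s N) ∧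
      r ⁻¹' tsupport ⇑f ⊆ ⋃ N ∈ 𝒩, N ∧
      (∀ N ∈ 𝒩, NonnegFn ⇑(gN N) ∧
        Function.support ⇑(gN N) ⊆ N ∩ r ⁻¹' tsupport ⇑f) ∧
      (∀ e, ∑ N ∈ 𝒩, (gN N e) ^ 2 = f (r e)) ∧
      π f = ∑ N ∈ 𝒩, ψ (gN N) * star (ψ (gN N))

/-- A local `r`-fibration `(𝒰, W)`. -/
structure IsLocalRFib (r s : G → V) (𝒰 : Finset (Set G)) (W : Set V) : Prop where
  disj : (𝒰 : Set (Set G)).Pairwise Disjoint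
  sSec : ∀ U ∈ 𝒰, IsSSection s U
  rSec : ∀ U ∈ 𝒰, IsSSection r U
  pre : r ⁻¹' W = ⋃ U ∈ 𝒰, U
  ran : ∀ U ∈ 𝒰, r '' U = W

/-- An open local `r`-fibration. -/
def IsOpenLocalRFib (r s : G → V) (𝒰 : Finset (Set G)) (W : Set V) : Prop :=
  IsLocalRFib r s 𝒰 W ∧ IsOpen W ∧ ∀ U ∈ 𝒰, IsOpen U

/-- A precompact local `r`-fibration. -/
def IsPrecompactLocalRFib (r s : G → V) (𝒰 : Finset (Set G)) (W : Set V) : Prop :=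
  IsLocalRFib r s 𝒰 W ∧ IsCompact (closure W) ∧ ∀ U ∈ 𝒰, IsCompact (closure U)


variable {V G : Type*} [TopologicalSpace V] [TopologicalSpace G]

/-- The space `Eⁿ` of paths of length `n`, as a subset of `(E¹)ⁿ`. -/
def PathSet (r s : G → V) (n : ℕ) : Set (Fin n → G) :=
  {μ | ∀ (i : ℕ) (h : i + 1 < n), s (μ ⟨i, by omega⟩) = r (μ ⟨i + 1, h⟩)}

/-- The function `x₁ ◇ ⋯ ◇ xₙ` on `(E¹)ⁿ`. -/
def diam {n : ℕ} (x : Fin n → C_c(G, ℂ)) (μ : Fin n → G) : ℂ := ∏ i, x i (μ i)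

/-- `lprod a [b₁,…,bₖ] = a * b₁ * ⋯ * bₖ` (products in a possibly non-unital ring). -/
def lprod {M : Type*} [Mul M] : M → List M → M
  | a, [] => a
  | a, b :: l => lprod (a * b) l

/-- The product `F 0 * F 1 * ⋯ * F (n-1)` for `n ≥ 1`. -/
def finProd {M : Type*} [Mul M] {n : ℕ} (hn : 0 < n) (F : Fin n → M) : M :=
  lprod (F ⟨0, hn⟩) (List.ofFn fun i : Fin (n - 1) => F ⟨(i : ℕ) + 1, by omega⟩)

/-- The infinite path space `E^∞`. -/
def InfPath (r s : G → V) : Type _ := {z : ℕ → G // ∀ i, s (z i) = r (z (i + 1))}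

instance (r s : G → V) : TopologicalSpace (InfPath r s) :=
  inferInstanceAs (TopologicalSpace {z : ℕ → G // ∀ i, s (z i) = r (z (i + 1))})

/-- The shift map `σ : E^∞ → E^∞`. -/
def shift (r s : G → V) : InfPath r s → InfPath r s :=
  fun z => ⟨fun i => z.1 (i + 1), fun i => z.2 (i + 1)⟩

/-- A list of edges is a (finite) path when consecutive edges compose. -/
def IsPathL (r s : G → V) (μ : List G) : Prop := μ.Chain' fun e f => s e = r f

/-- The cylinder set `Z(μ)` of a finite path `μ` of positive length. -/
def cylP (r s : G → V) (μ : List G) : Set (InfPath r s) :=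
  {z | ∀ (i : ℕ) (h : i < μ.length), z.1 i = μ.get ⟨i, h⟩}

/-- The cylinder set `Z(v)` of a vertex `v`. -/
def cylV (r s : G → V) (v : V) : Set (InfPath r s) := {z | r (z.1 0) = v}

/-- `t_μ`, with the convention `t_v = q_v` for paths `μ` of length zero based at `v`. -/
def tPath {M : Type*} [Mul M] (Q : V → M) (T : G → M) (v : V) : List G → M
  | [] => Q v
  | e :: l => lprod (T e) (l.map T)

variable {B : Type*} [NonUnitalCStarAlgebra B]

/-- A Cuntz–Krieger `E`-family in `B`. -/
structure IsCKFamily (r s : G → V) (Q : V → B) (T : G → B) : Prop where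
  proj : ∀ v, star (Q v) = Q v ∧ Q v * Q v = Q v
  orth : ∀ v w, v ≠ w → Q v * Q w = 0
  srce : ∀ e, star (T e) * T e = Q (s e)
  ck : ∀ (v : V) (F : Finset G), (∀ e, e ∈ F ↔ r e = v) → Q v = ∑ e ∈ F, T e * star (T e)




open Topology Set Function

theorem IsSSection.mono {s : G → V} {U U' : Set G} (h : IsSSection s U) (hsub : U' ⊆ U) :
    IsSSection s U' :=
  (h.comp (Topology.IsEmbedding.inclusion hsub) : _)

theorem IsSSection.injOn {s : G → V} {U : Set G} (h : IsSSection s U) : Set.InjOn s U :=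
  fun a ha b hb hab => congrArg Subtype.val
    (h.injective (show U.restrict s ⟨a, ha⟩ = U.restrict s ⟨b, hb⟩ from hab))

theorem isSSection_of_injOn {s : G → V} (hs : IsLocalHomeomorph s) {U : Set G}
    (hUo : IsOpen U) (hinj : Set.InjOn s U) : IsSSection s U := by
  have hom : IsOpenMap (U.restrict s) := hs.isOpenMap.comp hUo.isOpenMap_subtype_val
  have hcont : Continuous (U.restrict s) := hs.continuous.comp continuous_subtype_val
  have hi : Function.Injective (U.restrict s) := fun a b hab =>
    Subtype.ext (hinj a.2 b.2 hab)
  exact (Topology.IsOpenEmbedding.of_continuous_injective_isOpenMap hcont hi hom).isEmbedding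

theorem exists_open_ssection [T2Space V] {s : G → V} (hs : IsLocalHomeomorph s) {K : Set G}
    (hK : IsCompact K) (hsec : Set.InjOn s K) :
    ∃ U, IsOpen U ∧ K ⊆ U ∧ IsSSection s U := by
  set C : Set (G × G) := {p | s p.1 = s p.2} \ Set.diagonal G with hCdef
  have hC : IsOpen Cᶜ := by
    rw [isOpen_iff_forall_mem_open]
    intro p hp
    by_cases hD : s p.1 = s p.2
    · have hdiag : p.1 = p.2 := by
        by_contra hne
        exact hp ⟨hD, hne⟩
      obtain ⟨W, hWo, hW1, hinj⟩ := hs.isLocallyInjective p.1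
      refine ⟨W ×ˢ W, ?_, hWo.prod hWo, ⟨hW1, hdiag ▸ hW1⟩⟩
      rintro ⟨a, b⟩ ⟨ha, hb⟩ ⟨hab, hne⟩
      exact hne (hinj ha hb hab)
    · refine ⟨{p | s p.1 = s p.2}ᶜ, fun q hq hq' => hq hq'.1, ?_, hD⟩
      exact (isClosed_eq (hs.continuous.comp continuous_fst)
        (hs.continuous.comp continuous_snd)).isOpen_compl
  have hsub : K ×ˢ K ⊆ Cᶜ := by
    rintro ⟨a, b⟩ ⟨ha, hb⟩ ⟨hab, hne⟩
    exact hne (hsec ha hb hab)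
  obtain ⟨u, v, huo, hvo, hKu, hKv, huv⟩ := generalized_tube_lemma hK hK hC hsub
  refine ⟨u ∩ v, huo.inter hvo, Set.subset_inter hKu hKv, isSSection_of_injOn hs
    (huo.inter hvo) fun a ha b hb hab => ?_⟩
  by_contra hne
  exact huv (Set.mk_mem_prod ha.1 hb.2) ⟨hab, hne⟩


theorem exists_pushforward [T2Space V] {s : G → V} (hs : IsLocalHomeomorph s) {U : Set G}
    (hUo : IsOpen U) (hU : IsSSection s U) {F : G → ℂ} (hF : Continuous F)
    (hFc : HasCompactSupport F) (hFU : tsupport F ⊆ U) :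
    ∃ g : C_c(V, ℂ), (∀ e ∈ U, g (s e) = F e) ∧ ∀ v ∉ s '' U, g v = 0 := by
  set f : U → V := U.restrict s with hf
  have hfi : Function.Injective f := hU.injective
  set g : V → ℂ := Function.extend f (fun e => F e) 0 with hg
  have h1 : ∀ e, e ∈ U → g (s e) = F e := fun e he => by
    have : s e = f ⟨e, he⟩ := rfl
    rw [this, hg, hfi.extend_apply]
  have hrange : Set.range f = s '' U := Set.range_restrict s U
  have h2 : ∀ v ∉ s '' U, g v = 0 := fun v hv => by
    rw [hg, Function.extend_apply' _ _ _ (show ¬ v ∈ Set.range f by rw [hrange]; exact hv), Pi.zero_apply]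
  have hzero : ∀ w ∉ s '' tsupport F, g w = 0 := by
    intro w hw
    by_cases hwU : w ∈ s '' U
    · obtain ⟨e, heU, rfl⟩ := hwU
      rw [h1 e heU]
      by_contra hne
      exact hw ⟨e, subset_tsupport F hne, rfl⟩
    · exact h2 w hwU
  have himg : IsCompact (s '' tsupport F) := hFc.image hs.continuous
  have hcs : HasCompactSupport g := by
    refine IsCompact.of_isClosed_subset himg isClosed_closure
      (closure_minimal ?_ himg.isClosed)
    intro v hv
    by_contra hvn
    exact hv (hzero v hvn)
  have hofU : IsOpen (s '' U) := hs.isOpenMap U hUo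
  have hcont : Continuous g := by
    rw [continuous_iff_continuousAt]
    intro v
    by_cases hvU : v ∈ s '' U
    · apply ContinuousOn.continuousAt _ (hofU.mem_nhds hvU)
      rw [continuousOn_iff_continuous_restrict]
      set H := (show Topology.IsEmbedding f from hU).toHomeomorph
      set E := Homeomorph.setCongr hrange.symm
      have hfun : (s '' U).restrict g = fun p : s '' U => F ((H.symm (E p) : U) : G) := by
        funext p
        have hp : f (H.symm (E p)) = (p : V) := by
          have := H.apply_symm_apply (E p)
          exact congrArg Subtype.val this
        calc (s '' U).restrict g p = g (p : V) := rfl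
        _ = g (f (H.symm (E p))) := by rw [hp]
        _ = F ((H.symm (E p) : U) : G) := by rw [hg, hfi.extend_apply]
      show Continuous ((s '' U).restrict g)
      rw [hfun]
      exact hF.comp (continuous_subtype_val.comp (H.symm.continuous.comp E.continuous))
    · have hvc : v ∈ (s '' tsupport F)ᶜ := fun hmem => hvU (Set.image_mono hFU hmem)
      apply ContinuousOn.continuousAt _ ((himg.isClosed.isOpen_compl).mem_nhds hvc)
      exact ContinuousOn.congr continuousOn_const fun w hw => hzero w hw
  exact ⟨⟨⟨g, hcont⟩, hcs⟩, h1, h2⟩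

def ccToC0 {α : Type*} [TopologicalSpace α] (f : C_c(α, ℂ)) : C₀(α, ℂ) :=
  ⟨f.toContinuousMap, zero_at_infty f⟩

@[simp] lemma ccToC0_apply {α : Type*} [TopologicalSpace α] (f : C_c(α, ℂ)) (v : α) :
    ccToC0 f v = f v := rfl

def mulCc (φ : G → ℂ) (hφ : Continuous φ) (y : C_c(G, ℂ)) : C_c(G, ℂ) :=
  ⟨⟨fun e => φ e * y e, hφ.mul (map_continuous y)⟩,
    (y.hasCompactSupport : HasCompactSupport ⇑y).mul_left⟩

@[simp] lemma mulCc_apply (φ : G → ℂ) (hφ : Continuous φ) (y : C_c(G, ℂ)) (e : G) :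
    mulCc φ hφ y e = φ e * y e := rfl


lemma conj_mul_self (w : ℂ) : starRingEnd ℂ w * w = (‖w‖ : ℂ) ^ 2 := by
  rw [← Complex.normSq_eq_conj_mul_self, ← Complex.ofReal_pow,
    Complex.sq_norm]

lemma polarB (a b : B) :
    star a * b = (4⁻¹ : ℂ) •
      ((star (a + (1:ℂ) • b) * (a + (1:ℂ) • b))
        + (-Complex.I) • (star (a + Complex.I • b) * (a + Complex.I • b))
        + (-1 : ℂ) • (star (a + (-1:ℂ) • b) * (a + (-1:ℂ) • b))
        + Complex.I • (star (a + (-Complex.I) • b) * (a + (-Complex.I) • b))) := by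
  simp only [star_add, star_smul, Complex.star_def, map_one, map_neg, Complex.conj_I,
    add_mul, mul_add, smul_mul_assoc, mul_smul_comm, smul_smul, smul_add, neg_neg]
  match_scalars <;> ring_nf
  · linear_combination (2⁻¹ : ℂ) * Complex.I_mul_I
  · linear_combination (-(2⁻¹) : ℂ) * Complex.I_mul_I

theorem repInner [LocallyCompactSpace G] [T2Space G] [T2Space V]
    {r s : G → V} (hs : IsLocalHomeomorph s)
    {ψ : C_c(G, ℂ) →ₗ[ℂ] B} {π : C₀(V, ℂ) →⋆ₙₐ[ℂ] B} (hT : IsToeplitzRep r s ψ π)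
    (x y : C_c(G, ℂ)) (hx : IsSSection s (tsupport ⇑x)) (hy : IsSSection s (tsupport ⇑y))
    (g : C₀(V, ℂ))
    (hg1 : ∀ e, x e * y e ≠ 0 → g (s e) = starRingEnd ℂ (x e) * y e)
    (hg2 : ∀ v, (¬ ∃ e, x e * y e ≠ 0 ∧ s e = v) → g v = 0) :
    π g = star (ψ x) * ψ y := by
  obtain ⟨Ux, hUxo, hxUx, hUx⟩ := exists_open_ssection hs x.hasCompactSupport hx.injOn
  obtain ⟨Uy, hUyo, hyUy, hUy⟩ := exists_open_ssection hs y.hasCompactSupport hy.injOn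
  have hKc : IsCompact (tsupport ⇑x ∩ tsupport ⇑y) :=
    x.hasCompactSupport.inter y.hasCompactSupport
  have hKU : tsupport ⇑x ∩ tsupport ⇑y ⊆ Ux ∩ Uy := Set.inter_subset_inter hxUx hyUy
  obtain ⟨K', hK'c, hKK', hK'U⟩ := exists_compact_between hKc (hUxo.inter hUyo) hKU
  obtain ⟨L, hLc, hK'L, hLU⟩ := exists_compact_between hK'c (hUxo.inter hUyo) hK'U
  obtain ⟨φ, hφ1, hφ0, hφc, hφ01⟩ := exists_continuous_one_zero_of_isCompact hK'c
    isOpen_interior.isClosed_compl (disjoint_compl_right_iff_subset.mpr hK'L)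
  set φC : G → ℂ := fun e => ((φ e : ℝ) : ℂ) with hφC
  have hφCc : Continuous φC := Complex.continuous_ofReal.comp φ.continuous
  set y₁ : C_c(G, ℂ) := mulCc φC hφCc y with hy₁
  set y₂ : C_c(G, ℂ) := mulCc (fun e => 1 - φC e) (continuous_const.sub hφCc) y with hy₂
  have hy₁e : ∀ e, y₁ e = φC e * y e := fun e => rfl
  have hy₂e : ∀ e, y₂ e = (1 - φC e) * y e := fun e => rfl
  have hyadd : ψ y = ψ y₁ + ψ y₂ := by
    rw [← map_add]
    congr 1
    ext e
    show y e = y₁ e + y₂ e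
    rw [hy₁e, hy₂e]; ring
  have hsupp₁ : Function.support ⇑y₁ ⊆ interior L := by
    intro e he
    by_contra hni
    have h0 : φ e = 0 := hφ0 hni
    exact he (by rw [hy₁e, hφC]; simp [h0])
  have hty₁L : tsupport ⇑y₁ ⊆ L :=
    (closure_mono hsupp₁).trans (closure_minimal interior_subset hLc.isClosed)
  have hty₂ : tsupport ⇑y₂ ⊆ (interior K')ᶜ := by
    refine closure_minimal ?_ isOpen_interior.isClosed_compl
    intro e he hmem
    have h1 : φ e = 1 := hφ1 (interior_subset hmem)
    exact he (by rw [hy₂e, hφC]; simp [h1])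
  have hty₂y : tsupport ⇑y₂ ⊆ tsupport ⇑y :=
    closure_mono fun e he => fun h0 => he (by rw [hy₂e, h0, mul_zero])
  have hdisj : Disjoint (tsupport ⇑x) (tsupport ⇑y₂) := by
    rw [Set.disjoint_left]
    intro p hpx hp2
    exact hty₂ hp2 (hKK' ⟨hpx, hty₂y hp2⟩)
  obtain ⟨W₁, W₂, hW₁o, hW₂o, hxW₁, hy₂W₂, hW₁₂⟩ :=
    SeparatedNhds.of_isCompact_isCompact x.hasCompactSupport y₂.hasCompactSupport hdisj
  have horth : star (ψ x) * ψ y₂ = 0 :=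
    hT.orth x y₂ (Ux ∩ W₁) (Uy ∩ W₂) (hUxo.inter hW₁o) (hUyo.inter hW₂o)
      (hUx.mono Set.inter_subset_left) (hUy.mono Set.inter_subset_left)
      (hW₁₂.mono Set.inter_subset_right Set.inter_subset_right)
      (Set.subset_inter hxUx hxW₁) (Set.subset_inter (hty₂y.trans hyUy) hy₂W₂)
  have hty₁Ux : tsupport ⇑y₁ ⊆ Ux := hty₁L.trans (hLU.trans Set.inter_subset_left)
  have main : ∀ c : ℂ, ∃ gc : C_c(V, ℂ),
      (∀ e ∈ Ux, gc (s e) = starRingEnd ℂ ((x + c • y₁) e) * ((x + c • y₁) e)) ∧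
      (∀ v ∉ s '' Ux, gc v = 0) ∧
      π (ccToC0 gc) = star (ψ (x + c • y₁)) * ψ (x + c • y₁) := by
    intro c
    set z : C_c(G, ℂ) := x + c • y₁ with hzdef
    have hzapp : ∀ e, z e = x e + c * y₁ e := fun e => by rw [hzdef]; simp
    have hz1 : Function.support ⇑z ⊆ tsupport ⇑x ∪ tsupport ⇑y₁ := by
      intro e he
      by_contra hn
      rw [Set.mem_union] at hn
      push_neg at hn
      refine he ?_
      show z e = 0
      rw [hzapp e, image_eq_zero_of_notMem_tsupport hn.1,
        image_eq_zero_of_notMem_tsupport hn.2, mul_zero, add_zero]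
    have htz : tsupport ⇑z ⊆ Ux :=
      (closure_minimal hz1 (isClosed_closure.union isClosed_closure)).trans
        (Set.union_subset hxUx hty₁Ux)
    have hFcont : Continuous fun e => starRingEnd ℂ (z e) * z e :=
      ((continuous_star.comp (map_continuous z)).mul (map_continuous z) : _)
    have hFcs : HasCompactSupport fun e => starRingEnd ℂ (z e) * z e :=
      (z.hasCompactSupport : HasCompactSupport ⇑z).mul_left
    have htF : tsupport (fun e => starRingEnd ℂ (z e) * z e) ⊆ Ux := by
      refine (closure_mono fun e he => ?_).trans htz
      intro h0
      exact he (show starRingEnd ℂ (z e) * z e = 0 by rw [h0]; simp)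
    obtain ⟨gc, hgc1, hgc2⟩ := exists_pushforward hs hUxo hUx hFcont hFcs htF
    refine ⟨gc, hgc1, hgc2, ?_⟩
    refine hT.inner z Ux hUxo hUx htz (ccToC0 gc) ?_ ?_
    · intro e hze
      rw [ccToC0_apply, hgc1 e (htz (subset_tsupport _ hze)), conj_mul_self]
    · intro v hv
      rw [ccToC0_apply]
      by_cases hvU : v ∈ s '' Ux
      · obtain ⟨e, heU, rfl⟩ := hvU
        rw [hgc1 e heU]
        have hz0 : z e = 0 := by
          by_contra h0
          exact hv ⟨e, h0, rfl⟩
        rw [hz0]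
        simp
      · exact hgc2 v hvU
  obtain ⟨g1, hA1, hB1, hπ1⟩ := main 1
  obtain ⟨gI, hAI, hBI, hπI⟩ := main Complex.I
  obtain ⟨gm, hAm, hBm, hπm⟩ := main (-1)
  obtain ⟨gJ, hAJ, hBJ, hπJ⟩ := main (-Complex.I)
  have happ : ∀ (c : ℂ) (e : G), (x + c • y₁) e = x e + c * y₁ e := fun c e => by
    simp
  have hgeq : g = (4⁻¹ : ℂ) • (ccToC0 g1 + (-Complex.I) • ccToC0 gI
      + (-1 : ℂ) • ccToC0 gm + Complex.I • ccToC0 gJ) := by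
    ext v
    show g v = (4⁻¹ : ℂ) * (g1 v + (-Complex.I) * gI v + (-1:ℂ) * gm v + Complex.I * gJ v)
    by_cases hvU : v ∈ s '' Ux
    · obtain ⟨e, heU, rfl⟩ := hvU
      rw [hA1 e heU, hAI e heU, hAm e heU, hAJ e heU, happ, happ, happ, happ]
      have hgv : g (s e) = starRingEnd ℂ (x e) * y₁ e := by
        by_cases hxy : x e * y e = 0
        · have hz : starRingEnd ℂ (x e) * y₁ e = 0 := by
            rcases mul_eq_zero.mp hxy with h | h
            · rw [h]; simp
            · rw [hy₁e, h, mul_zero, mul_zero]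
          rw [hz]
          refine hg2 _ ?_
          rintro ⟨e', he', hse⟩
          have hxe' : e' ∈ Ux := hxUx (subset_tsupport _ fun h0 => he' (by rw [h0, zero_mul]))
          have : e' = e := hUx.injOn hxe' heU hse
          rw [this] at he'
          exact he' hxy
        · have heK : e ∈ K' := interior_subset (hKK'
            ⟨subset_tsupport _ fun h0 => hxy (by rw [h0, zero_mul]),
             subset_tsupport _ fun h0 => hxy (by rw [h0, mul_zero])⟩)
          rw [hg1 e hxy, hy₁e, hφC]
          simp [hφ1 heK]
      rw [hgv]
      simp only [map_add, map_mul, map_one, map_neg, Complex.conj_I, one_mul, neg_mul]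
      linear_combination (2⁻¹ * (starRingEnd ℂ (x e) * y₁ e)
        - 2⁻¹ * (starRingEnd ℂ (y₁ e) * x e)) * Complex.I_mul_I
    · rw [hB1 v hvU, hBI v hvU, hBm v hvU, hBJ v hvU, hg2 v ?_]
      · simp
      · rintro ⟨e, he, hse⟩
        have hxe : e ∈ Ux := hxUx (subset_tsupport _ fun h0 => he (by rw [h0, zero_mul]))
        exact hvU ⟨e, hxe, hse⟩
  have hmain : π g = star (ψ x) * ψ y₁ := by
    rw [hgeq, map_smul, map_add, map_add, map_add, map_smul, map_smul, map_smul,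
      hπ1, hπI, hπm, hπJ]
    have hψ : ∀ c : ℂ, ψ (x + c • y₁) = ψ x + c • ψ y₁ := fun c => by
      rw [map_add, map_smul]
    rw [hψ, hψ, hψ, hψ]
    exact (polarB (ψ x) (ψ y₁)).symm
  rw [hyadd, mul_add, horth, add_zero, hmain]

theorem exists_inner [T2Space V] {s : G → V} (hs : IsLocalHomeomorph s)
    (x y : C_c(G, ℂ)) (hx : IsSSection s (tsupport ⇑x)) :
    ∃ g : C_c(V, ℂ), (∀ e, x e * y e ≠ 0 → g (s e) = starRingEnd ℂ (x e) * y e) ∧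
      (∀ v, (¬ ∃ e, x e * y e ≠ 0 ∧ s e = v) → g v = 0) := by
  obtain ⟨Ux, hUxo, hxUx, hUx⟩ := exists_open_ssection hs x.hasCompactSupport hx.injOn
  have hFcont : Continuous fun e => starRingEnd ℂ (x e) * y e :=
    ((continuous_star.comp (map_continuous x)).mul (map_continuous y) : _)
  have hFcs : HasCompactSupport fun e => starRingEnd ℂ (x e) * y e := by
    apply HasCompactSupport.mul_right
    exact (x.hasCompactSupport : HasCompactSupport ⇑x).comp_left (g := starRingEnd ℂ) (map_zero _)
  have htF : tsupport (fun e => starRingEnd ℂ (x e) * y e) ⊆ Ux := by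
    refine (closure_mono fun e he => ?_).trans hxUx
    intro h0
    exact he (show starRingEnd ℂ (x e) * y e = 0 by rw [h0]; simp)
  obtain ⟨g, hgg1, hgg2⟩ := exists_pushforward hs hUxo hUx hFcont hFcs htF
  refine ⟨g, ?_, ?_⟩
  · intro e he
    exact hgg1 e (hxUx (subset_tsupport _ fun h0 => he (by rw [h0, zero_mul])))
  · intro v hv
    by_cases hvU : v ∈ s '' Ux
    · obtain ⟨e, heU, rfl⟩ := hvU
      rw [hgg1 e heU]
      by_cases hxe : x e * y e = 0
      · rcases mul_eq_zero.mp hxe with h | h <;> rw [h] <;> simp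
      · exact absurd ⟨e, hxe, rfl⟩ hv
    · exact hgg2 v hvU


lemma lprod_concat {M : Type*} [Mul M] (l : List M) :
    ∀ a b : M, lprod a (l ++ [b]) = lprod a l * b := by
  induction l with
  | nil => intro a b; rfl
  | cons c l ih =>
    intro a b
    show lprod (a * c) (l ++ [b]) = lprod (a * c) l * b
    exact ih (a * c) b

lemma finProd_one {M : Type*} [Mul M] (F : Fin 1 → M) (h : 0 < 1) : finProd h F = F 0 := rfl

lemma finProd_succ {M : Type*} [Mul M] (n : ℕ) (F : Fin (n + 2) → M) :
    finProd (Nat.succ_pos (n + 1)) F =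
      finProd (Nat.succ_pos n) (fun i : Fin (n + 1) => F i.castSucc) * F (Fin.last (n + 1)) := by
  show lprod (F ⟨0, _⟩) (List.ofFn fun i : Fin (n + 1) => F ⟨(i : ℕ) + 1, by omega⟩) = _
  rw [List.ofFn_succ', List.concat_eq_append, lprod_concat]
  rfl

lemma diam_one (x : Fin 1 → C_c(G, ℂ)) (μ : Fin 1 → G) : diam x μ = x 0 (μ 0) :=
  Fin.prod_univ_one _

lemma diam_split {n : ℕ} (x : Fin (n + 2) → C_c(G, ℂ)) (μ : Fin (n + 2) → G) :
    diam x μ = diam (fun i : Fin (n + 1) => x i.castSucc) (fun i => μ i.castSucc)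
      * x (Fin.last (n + 1)) (μ (Fin.last (n + 1))) :=
  Fin.prod_univ_castSucc _

lemma pathset_snoc {r s : G → V} {n : ℕ} {μ' : Fin (n + 1) → G} {e : G}
    (hμ' : μ' ∈ PathSet r s (n + 1)) (hlink : s (μ' (Fin.last n)) = r e) :
    Fin.snoc μ' e ∈ PathSet r s (n + 2) := by
  intro i h
  by_cases hi : i + 1 < n + 1
  · have h1 : (⟨i, by omega⟩ : Fin (n + 2)) = Fin.castSucc ⟨i, by omega⟩ := rfl
    have h2 : (⟨i + 1, h⟩ : Fin (n + 2)) = Fin.castSucc ⟨i + 1, hi⟩ := rfl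
    rw [h1, h2, Fin.snoc_castSucc, Fin.snoc_castSucc]
    exact hμ' i hi
  · have hie : i = n := by omega
    have h1 : (⟨i, by omega⟩ : Fin (n + 2)) = Fin.castSucc (Fin.last n) := by
      apply Fin.ext
      simp [hie]
    have h2 : (⟨i + 1, h⟩ : Fin (n + 2)) = Fin.last (n + 1) := by
      apply Fin.ext
      simp [hie]
    rw [h1, h2, Fin.snoc_castSucc, Fin.snoc_last]
    exact hlink

lemma pathset_restrict {r s : G → V} {n : ℕ} {μ : Fin (n + 2) → G}
    (hμ : μ ∈ PathSet r s (n + 2)) :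
    (fun i : Fin (n + 1) => μ i.castSucc) ∈ PathSet r s (n + 1) := by
  intro i h
  exact hμ i (by omega)

lemma pathset_link {r s : G → V} {n : ℕ} {μ : Fin (n + 2) → G}
    (hμ : μ ∈ PathSet r s (n + 2)) :
    s ((fun i : Fin (n + 1) => μ i.castSucc) (Fin.last n)) = r (μ (Fin.last (n + 1))) :=
  hμ n (by omega)

lemma snoc_restrict {n : ℕ} (μ' : Fin (n + 1) → G) (e : G) :
    (fun i : Fin (n + 1) => (Fin.snoc μ' e : Fin (n + 2) → G) i.castSucc) = μ' :=
  funext fun i => by simp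


theorem pathLemma [LocallyCompactSpace V] [T2Space V] [LocallyCompactSpace G] [T2Space G]
    (r s : G → V) (hr : Continuous r) (hs : IsLocalHomeomorph s)
    {B : Type*} [NonUnitalCStarAlgebra B]
    (ψ : C_c(G, ℂ) →ₗ[ℂ] B) (π : C₀(V, ℂ) →⋆ₙₐ[ℂ] B) (hT : IsToeplitzRep r s ψ π)
    (n : ℕ) :
    ∀ (x y : Fin (n + 1) → C_c(G, ℂ)),
      (∀ i, IsSSection s (tsupport ⇑(x i))) → (∀ i, IsSSection s (tsupport ⇑(y i))) →
      (∃ g : C_c(V, ℂ),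
        (∀ μ ∈ PathSet r s (n + 1), diam x μ * diam y μ ≠ 0 →
          g (s (μ (Fin.last n))) = starRingEnd ℂ (diam x μ) * diam y μ) ∧
        (∀ w, (¬ ∃ μ ∈ PathSet r s (n + 1),
            diam x μ * diam y μ ≠ 0 ∧ s (μ (Fin.last n)) = w) → g w = 0)) ∧
      (∀ g : C₀(V, ℂ),
        (∀ μ ∈ PathSet r s (n + 1), diam x μ * diam y μ ≠ 0 →
          g (s (μ (Fin.last n))) = starRingEnd ℂ (diam x μ) * diam y μ) →
        (∀ w, (¬ ∃ μ ∈ PathSet r s (n + 1),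
            diam x μ * diam y μ ≠ 0 ∧ s (μ (Fin.last n)) = w) → g w = 0) →
        π g = star (finProd (Nat.succ_pos n) fun i => ψ (x i))
          * finProd (Nat.succ_pos n) fun i => ψ (y i)) := by
  induction n with
  | zero =>
    intro x y hx hy
    have hmem : ∀ μ : Fin 1 → G, μ ∈ PathSet r s 1 := fun μ i h => absurd h (by omega)
    constructor
    · obtain ⟨g, hg1, hg2⟩ := exists_inner hs (x 0) (y 0) (hx 0)
      refine ⟨g, ?_, ?_⟩
      · intro μ hμ hne
        rw [diam_one, diam_one] at hne ⊢
        exact hg1 (μ 0) hne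
      · intro w hw
        refine hg2 w ?_
        rintro ⟨e, hne, hse⟩
        refine hw ⟨fun _ => e, hmem _, ?_, hse⟩
        rw [diam_one, diam_one]
        exact hne
    · intro g hg1 hg2
      have h1 : ∀ e, x 0 e * y 0 e ≠ 0 → g (s e) = starRingEnd ℂ (x 0 e) * y 0 e := by
        intro e hne
        have := hg1 (fun _ => e) (hmem _) (by rw [diam_one, diam_one]; exact hne)
        rwa [diam_one, diam_one] at this
      have h2 : ∀ v, (¬ ∃ e, x 0 e * y 0 e ≠ 0 ∧ s e = v) → g v = 0 := by
        intro v hv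
        refine hg2 v ?_
        rintro ⟨μ, hμ, hne, hse⟩
        rw [diam_one, diam_one] at hne
        exact hv ⟨μ 0, hne, hse⟩
      exact repInner hs hT (x 0) (y 0) (hx 0) (hy 0) g h1 h2
  | succ m IH =>
    intro x y hx hy
    set x' : Fin (m + 1) → C_c(G, ℂ) := fun i => x i.castSucc with hx'def
    set y' : Fin (m + 1) → C_c(G, ℂ) := fun i => y i.castSucc with hy'def
    obtain ⟨⟨g', hg'1, hg'2⟩, hIH2⟩ := IH x' y' (fun i => hx _) (fun i => hy _)
    set xl : C_c(G, ℂ) := x (Fin.last (m + 1)) with hxl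
    set yl : C_c(G, ℂ) := y (Fin.last (m + 1)) with hyl
    have hg'cont : Continuous fun e => (g' (r e) : ℂ) := (map_continuous g').comp hr
    set yy : C_c(G, ℂ) := mulCc (fun e => g' (r e)) hg'cont yl with hyydef
    have hyye : ∀ e, yy e = g' (r e) * yl e := fun e => rfl
    have htyy : tsupport ⇑yy ⊆ tsupport ⇑yl :=
      closure_mono fun e he h0 => he (by rw [hyye, h0, mul_zero])
    have hyysec : IsSSection s (tsupport ⇑yy) := (hy _).mono htyy
    have key1 : ∀ e, xl e * yy e ≠ 0 → ∃ μ ∈ PathSet r s (m + 2),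
        (diam x μ * diam y μ ≠ 0 ∧ s (μ (Fin.last (m + 1))) = s e) ∧
        starRingEnd ℂ (diam x μ) * diam y μ = starRingEnd ℂ (xl e) * yy e := by
      intro e hne
      have hgr : g' (r e) ≠ 0 := fun h0 => hne (by rw [hyye, h0, zero_mul, mul_zero])
      have hylne : yl e ≠ 0 := fun h0 => hne (by rw [hyye, h0, mul_zero, mul_zero])
      have hxlne : xl e ≠ 0 := fun h0 => hne (by rw [h0, zero_mul])
      have hex : ∃ μ' ∈ PathSet r s (m + 1),
          diam x' μ' * diam y' μ' ≠ 0 ∧ s (μ' (Fin.last m)) = r e := by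
        by_contra hno
        exact hgr (hg'2 (r e) hno)
      obtain ⟨μ', hμ'P, hμ'ne, hμ's⟩ := hex
      have hdx : diam x (Fin.snoc μ' e) = diam x' μ' * xl e := by
        rw [diam_split, snoc_restrict]
        congr 1
        rw [Fin.snoc_last]
      have hdy : diam y (Fin.snoc μ' e) = diam y' μ' * yl e := by
        rw [diam_split, snoc_restrict]
        congr 1
        rw [Fin.snoc_last]
      have hg'val : g' (r e) = starRingEnd ℂ (diam x' μ') * diam y' μ' := by
        rw [← hμ's]
        exact hg'1 μ' hμ'P hμ'ne
      refine ⟨Fin.snoc μ' e, pathset_snoc hμ'P hμ's, ⟨?_, ?_⟩, ?_⟩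
      · rw [hdx, hdy]
        have h1 : diam x' μ' ≠ 0 := left_ne_zero_of_mul hμ'ne
        have h2 : diam y' μ' ≠ 0 := right_ne_zero_of_mul hμ'ne
        exact mul_ne_zero (mul_ne_zero h1 hxlne) (mul_ne_zero h2 hylne)
      · rw [show (Fin.snoc μ' e : Fin (m + 2) → G) (Fin.last (m + 1)) = e from by simp]
      · rw [hdx, hdy, hyye, hg'val, map_mul]
        ring
    have key2 : ∀ μ ∈ PathSet r s (m + 2), diam x μ * diam y μ ≠ 0 →
        xl (μ (Fin.last (m + 1))) * yy (μ (Fin.last (m + 1))) ≠ 0 ∧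
        starRingEnd ℂ (xl (μ (Fin.last (m + 1)))) * yy (μ (Fin.last (m + 1)))
          = starRingEnd ℂ (diam x μ) * diam y μ := by
      intro μ hμ hne
      set e : G := μ (Fin.last (m + 1)) with hedef
      set μ'' : Fin (m + 1) → G := fun i => μ i.castSucc with hμ''def
      have hμ''P : μ'' ∈ PathSet r s (m + 1) := pathset_restrict hμ
      have hdx : diam x μ = diam x' μ'' * xl e := diam_split x μ
      have hdy : diam y μ = diam y' μ'' * yl e := diam_split y μ
      have hxne : diam x' μ'' * xl e ≠ 0 := by rw [← hdx]; exact left_ne_zero_of_mul hne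
      have hyne : diam y' μ'' * yl e ≠ 0 := by rw [← hdy]; exact right_ne_zero_of_mul hne
      have hμ'ne : diam x' μ'' * diam y' μ'' ≠ 0 :=
        mul_ne_zero (left_ne_zero_of_mul hxne) (left_ne_zero_of_mul hyne)
      have hlink : s (μ'' (Fin.last m)) = r e := pathset_link hμ
      have hg'val : g' (r e) = starRingEnd ℂ (diam x' μ'') * diam y' μ'' := by
        rw [← hlink]
        exact hg'1 μ'' hμ''P hμ'ne
      constructor
      · rw [hyye, hg'val]
        exact mul_ne_zero (right_ne_zero_of_mul hxne)
          (mul_ne_zero (mul_ne_zero (fun h0 => left_ne_zero_of_mul hμ'ne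
            (by simpa using congrArg (starRingEnd ℂ) h0)) (right_ne_zero_of_mul hμ'ne))
            (right_ne_zero_of_mul hyne))
      · rw [hyye, hg'val, hdx, hdy, map_mul]
        ring
    constructor
    · obtain ⟨g'', hgg1, hgg2⟩ := exists_inner hs xl yy (hx _)
      refine ⟨g'', ?_, ?_⟩
      · intro μ hμ hne
        obtain ⟨hne', hval⟩ := key2 μ hμ hne
        rw [hgg1 _ hne', hval]
      · intro w hw
        refine hgg2 w ?_
        rintro ⟨e, hne, hse⟩
        obtain ⟨μ, hμP, ⟨hμne, hμs⟩, -⟩ := key1 e hne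
        exact hw ⟨μ, hμP, hμne, by rw [hμs, hse]⟩
    · intro g hg1 hg2
      have h1 : ∀ e, xl e * yy e ≠ 0 → g (s e) = starRingEnd ℂ (xl e) * yy e := by
        intro e hne
        obtain ⟨μ, hμP, ⟨hμne, hμs⟩, hval⟩ := key1 e hne
        rw [← hμs, hg1 μ hμP hμne, hval]
      have h2 : ∀ v, (¬ ∃ e, xl e * yy e ≠ 0 ∧ s e = v) → g v = 0 := by
        intro v hv
        refine hg2 v ?_
        rintro ⟨μ, hμP, hμne, hμs⟩
        obtain ⟨hne', hval⟩ := key2 μ hμP hμne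
        exact hv ⟨μ (Fin.last (m + 1)), hne', hμs⟩
      have hrep := repInner hs hT xl yy (hx _) hyysec g h1 h2
      have hact : ψ yy = π (ccToC0 g') * ψ yl := hT.act (ccToC0 g') yl yy fun e => rfl
      have hmid : π (ccToC0 g') = star (finProd (Nat.succ_pos m) fun i => ψ (x' i))
          * finProd (Nat.succ_pos m) fun i => ψ (y' i) :=
        hIH2 (ccToC0 g') (fun μ hA hB => by rw [ccToC0_apply]; exact hg'1 μ hA hB)
          (fun w hw => by rw [ccToC0_apply]; exact hg'2 w hw)
      rw [finProd_succ m (fun i => ψ (x i)), finProd_succ m (fun i => ψ (y i)), star_mul]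
      calc π g = star (ψ xl) * ψ yy := hrep
        _ = star (ψ xl) * (π (ccToC0 g') * ψ yl) := by rw [hact]
        _ = star (ψ xl) * ((star (finProd (Nat.succ_pos m) fun i => ψ (x' i))
              * finProd (Nat.succ_pos m) fun i => ψ (y' i)) * ψ yl) := by rw [hmid]
        _ = (star (ψ xl) * star (finProd (Nat.succ_pos m) fun i => ψ (x' i)))
              * ((finProd (Nat.succ_pos m) fun i => ψ (y' i)) * ψ yl) := by
            simp only [mul_assoc]


/-- For `x₁, …, xₙ, y₁, …, yₙ ∈ C_c(E¹)` supported on `s`-sections, with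
`x = x₁◇⋯◇xₙ` and `y = y₁◇⋯◇yₙ`, one has `π(H(x,y)) = ψ(xₙ)*⋯ψ(x₁)* ψ(y₁)⋯ψ(yₙ)`; and if
`x = y` on `Eⁿ` then `ψ(x₁)⋯ψ(xₙ) = ψ(y₁)⋯ψ(yₙ)`. -/
theorem statement14 {V G : Type*} [TopologicalSpace V] [TopologicalSpace G]
    [LocallyCompactSpace V] [T2Space V] [LocallyCompactSpace G] [T2Space G]
    (r s : G → V) (hr : Continuous r) (hs : IsLocalHomeomorph s)
    {B : Type*} [NonUnitalCStarAlgebra B]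
    (ψ : C_c(G, ℂ) →ₗ[ℂ] B) (π : C₀(V, ℂ) →⋆ₙₐ[ℂ] B) (hT : IsToeplitzRep r s ψ π)
    (n : ℕ) (hn : 0 < n) (x y : Fin n → C_c(G, ℂ))
    (hx : ∀ i, IsSSection s (tsupport ⇑(x i)))
    (hy : ∀ i, IsSSection s (tsupport ⇑(y i))) :
    (∀ h : C₀(V, ℂ), HasCompactSupport ⇑h →
      (∀ μ ∈ PathSet r s n, diam x μ * diam y μ ≠ 0 →
        h (s (μ ⟨n - 1, by omega⟩)) = starRingEnd ℂ (diam x μ) * diam y μ) →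
      (∀ w : V, (¬ ∃ μ ∈ PathSet r s n,
          diam x μ * diam y μ ≠ 0 ∧ s (μ ⟨n - 1, by omega⟩) = w) → h w = 0) →
      π h = star (finProd hn fun i => ψ (x i)) * finProd hn fun i => ψ (y i)) ∧
    ((∀ μ ∈ PathSet r s n, diam x μ = diam y μ) →
      (finProd hn fun i => ψ (x i)) = finProd hn fun i => ψ (y i)) := by
  obtain ⟨m, rfl⟩ : ∃ m, n = m + 1 := ⟨n - 1, by omega⟩
  have hPL := pathLemma r s hr hs ψ π hT m
  obtain ⟨hExy, hAxy⟩ := hPL x y hx hy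
  constructor
  · intro h _ hc1 hc2
    exact hAxy h (fun μ hμ hne => hc1 μ hμ hne) (fun w hw => hc2 w hw)
  · intro hxy
    obtain ⟨⟨g₀, hg₀1, hg₀2⟩, hAxx⟩ := hPL x x hx hx
    have hAyx := (hPL y x hy hx).2
    have hAyy := (hPL y y hy hy).2
    have Exx : π (ccToC0 g₀) = (star (finProd (Nat.succ_pos m) fun i => ψ (x i)))
        * finProd (Nat.succ_pos m) fun i => ψ (x i) :=
      hAxx (ccToC0 g₀) (fun μ hμ hne => hg₀1 μ hμ hne) (fun w hw => hg₀2 w hw)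
    have Exy : π (ccToC0 g₀) = (star (finProd (Nat.succ_pos m) fun i => ψ (x i)))
        * finProd (Nat.succ_pos m) fun i => ψ (y i) := by
      refine hAxy (ccToC0 g₀) (fun μ hμ hne => ?_) (fun w hw => ?_)
      · have hd := hxy μ hμ
        have hne' : diam x μ * diam x μ ≠ 0 :=
          mul_ne_zero (left_ne_zero_of_mul hne) (left_ne_zero_of_mul hne)
        calc (ccToC0 g₀) (s (μ (Fin.last m))) = starRingEnd ℂ (diam x μ) * diam x μ :=
              hg₀1 μ hμ hne'
          _ = starRingEnd ℂ (diam x μ) * diam y μ := by rw [hd]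
      · refine hg₀2 w ?_
        rintro ⟨μ, hμ, hne, hsw⟩
        refine hw ⟨μ, hμ, ?_, hsw⟩
        rw [← hxy μ hμ]
        exact hne
    have Eyx : π (ccToC0 g₀) = (star (finProd (Nat.succ_pos m) fun i => ψ (y i)))
        * finProd (Nat.succ_pos m) fun i => ψ (x i) := by
      refine hAyx (ccToC0 g₀) (fun μ hμ hne => ?_) (fun w hw => ?_)
      · have hd := hxy μ hμ
        have hne' : diam x μ * diam x μ ≠ 0 :=
          mul_ne_zero (right_ne_zero_of_mul hne) (right_ne_zero_of_mul hne)
        calc (ccToC0 g₀) (s (μ (Fin.last m))) = starRingEnd ℂ (diam x μ) * diam x μ :=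
              hg₀1 μ hμ hne'
          _ = starRingEnd ℂ (diam y μ) * diam x μ := by rw [hd]
      · refine hg₀2 w ?_
        rintro ⟨μ, hμ, hne, hsw⟩
        refine hw ⟨μ, hμ, ?_, hsw⟩
        rw [← hxy μ hμ]
        exact hne
    have Eyy : π (ccToC0 g₀) = (star (finProd (Nat.succ_pos m) fun i => ψ (y i)))
        * finProd (Nat.succ_pos m) fun i => ψ (y i) := by
      refine hAyy (ccToC0 g₀) (fun μ hμ hne => ?_) (fun w hw => ?_)
      · have hd := hxy μ hμ
        have hne' : diam x μ * diam x μ ≠ 0 := by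
          rw [hd]
          exact mul_ne_zero (left_ne_zero_of_mul hne) (left_ne_zero_of_mul hne)
        calc (ccToC0 g₀) (s (μ (Fin.last m))) = starRingEnd ℂ (diam x μ) * diam x μ :=
              hg₀1 μ hμ hne'
          _ = starRingEnd ℂ (diam y μ) * diam y μ := by rw [hd]
      · refine hg₀2 w ?_
        rintro ⟨μ, hμ, hne, hsw⟩
        refine hw ⟨μ, hμ, ?_, hsw⟩
        rw [← hxy μ hμ]
        exact hne
    have hzero : star ((finProd (Nat.succ_pos m) fun i => ψ (x i))
        - finProd (Nat.succ_pos m) fun i => ψ (y i))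
        * ((finProd (Nat.succ_pos m) fun i => ψ (x i))
          - finProd (Nat.succ_pos m) fun i => ψ (y i)) = 0 := by
      rw [star_sub, sub_mul, mul_sub, mul_sub, ← Exx, ← Exy, ← Eyx, ← Eyy]
      simp
    have hsub := (CStarRing.star_mul_self_eq_zero_iff _).mp hzero
    exact sub_eq_zero.mp hsub


end TopGraphPaper
end
end

section
/- Let E be a topological graph and let (ψ, π) be a Toeplitz representation of E in a C*-algebra B. Let x₁, x₂ ∈ C_c(E¹). If s(osupp(x₁)) ∩ r(osupp(x₂)) = ∅, then ψ(x₁)ψ(x₂) = 0. If s(osupp(x₁)) ∩ s(osupp(x₂)) = ∅, then ψ(x₁)ψ(x₂)* = 0. -/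
open scoped ZeroAtInfty CompactlySupported ComplexOrder

noncomputable section

namespace TopGraphPaper

variable {V G : Type*} [TopologicalSpace V] [TopologicalSpace G]

variable {B : Type*} [NonUnitalCStarAlgebra B]

variable {V G : Type*} [TopologicalSpace V] [TopologicalSpace G]

variable {B : Type*} [NonUnitalCStarAlgebra B]

section Statement16Helpers

variable {V G : Type*} [TopologicalSpace V] [TopologicalSpace G]

/-- Construction of the real-valued function `x̂` for `x` supported in an open `s`-section. -/
lemma exists_g0 [T2Space V] {s : G → V} (hs : IsLocalHomeomorph s)
    (x : C_c(G, ℂ)) {U : Set G} (hUo : IsOpen U) (hUs : IsSSection s U)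
    (hsupp : tsupport ⇑x ⊆ U) :
    ∃ g0 : V → ℝ, Continuous g0 ∧ HasCompactSupport g0 ∧
      (∀ e ∈ U, g0 (s e) = ‖x e‖ ^ 2) ∧
      (∀ v, v ∉ s '' Function.support ⇑x → g0 v = 0) ∧ ∀ v, 0 ≤ g0 v := by
  classical
  have he : Topology.IsEmbedding (U.restrict s) := hUs
  let Φ : U ≃ₜ Set.range (U.restrict s) := he.toHomeomorph
  have hΦapp : ∀ u : U, (Φ u : V) = s (u : G) := fun u => rfl
  have hΦ : ∀ z : Set.range (U.restrict s), s ((Φ.symm z : U) : G) = (z : V) := by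
    intro z
    have h1 := hΦapp (Φ.symm z)
    rw [Φ.apply_symm_apply] at h1
    exact h1.symm
  set g0 : V → ℝ := fun v =>
    if h : v ∈ Set.range (U.restrict s) then ‖x ((Φ.symm ⟨v, h⟩ : U) : G)‖ ^ 2 else 0 with hg0
  have hrange : Set.range (U.restrict s) = s '' U := Set.range_restrict s U
  have hWr : IsOpen (Set.range (U.restrict s)) := by
    rw [hrange]; exact hs.isOpenMap U hUo
  have hval : ∀ (v) (h : v ∈ Set.range (U.restrict s)),
      g0 v = ‖x ((Φ.symm ⟨v, h⟩ : U) : G)‖ ^ 2 := fun v h => dif_pos h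
  have hzero : ∀ v, v ∉ s '' Function.support ⇑x → g0 v = 0 := by
    intro v hv
    by_cases h : v ∈ Set.range (U.restrict s)
    · rw [hval v h]
      by_cases hx : x ((Φ.symm ⟨v, h⟩ : U) : G) = 0
      · simp [hx]
      · exact absurd ⟨_, hx, hΦ ⟨v, h⟩⟩ hv
    · exact dif_neg h
  have hUval : ∀ e ∈ U, g0 (s e) = ‖x e‖ ^ 2 := by
    intro e heU
    have h : s e ∈ Set.range (U.restrict s) := ⟨⟨e, heU⟩, rfl⟩
    rw [hval _ h]
    have hsymm : Φ.symm ⟨s e, h⟩ = ⟨e, heU⟩ :=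
      Φ.toEquiv.symm_apply_eq.mpr (Subtype.ext (hΦapp ⟨e, heU⟩).symm)
    rw [hsymm]
  have hKc : IsCompact (s '' tsupport ⇑x) := x.hasCompactSupport.image hs.continuous
  have hzero' : ∀ v, v ∉ s '' tsupport ⇑x → g0 v = 0 := fun v hv =>
    hzero v fun hmem => by
      obtain ⟨e, he1, he2⟩ := hmem
      exact hv ⟨e, subset_closure he1, he2⟩
  have hcont : Continuous g0 := by
    rw [continuous_iff_continuousAt]
    intro v
    by_cases hv : v ∈ Set.range (U.restrict s)
    · have hco : ContinuousOn g0 (Set.range (U.restrict s)) := by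
        rw [continuousOn_iff_continuous_restrict]
        have hres : (Set.range (U.restrict s)).restrict g0 =
            fun z => ‖x ((Φ.symm z : U) : G)‖ ^ 2 := by
          funext z; exact dif_pos z.2
        change Continuous ((Set.range (U.restrict s)).restrict g0)
        rw [hres]
        exact (((map_continuous x).comp continuous_subtype_val).comp
          Φ.symm.continuous).norm.pow 2
      exact hco.continuousAt (hWr.mem_nhds hv)
    · have hv' : v ∈ (s '' tsupport ⇑x)ᶜ := fun hmem =>
        hv (by rw [hrange]; exact Set.image_mono hsupp hmem)
      have hev : g0 =ᶠ[nhds v] fun _ => 0 :=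
        Filter.eventually_of_mem (hKc.isClosed.isOpen_compl.mem_nhds hv')
          fun w hw => hzero' w hw
      exact (continuousAt_congr hev).mpr continuousAt_const
  have hcs : HasCompactSupport g0 := HasCompactSupport.intro hKc hzero'
  have hnn : ∀ v, 0 ≤ g0 v := by
    intro v
    by_cases h : v ∈ Set.range (U.restrict s)
    · rw [hval v h]; positivity
    · rw [hg0]; simp only [dif_neg h]; exact le_refl 0
  exact ⟨g0, hcont, hcs, hUval, hzero, hnn⟩

/-- From the previous construction, produce `g, k ∈ C₀(V, ℂ)` with `g = k²`,
`π g = ψ(x)* ψ(x)`, `k` self-adjoint, both vanishing off `s(osupp x)`. -/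
lemma exists_gk [T2Space V] (r : G → V) {s : G → V} (hs : IsLocalHomeomorph s)
    {B : Type*} [NonUnitalCStarAlgebra B]
    (ψ : C_c(G, ℂ) →ₗ[ℂ] B) (π : C₀(V, ℂ) →⋆ₙₐ[ℂ] B) (hT : IsToeplitzRep r s ψ π)
    (x : C_c(G, ℂ)) {U : Set G} (hUo : IsOpen U) (hUs : IsSSection s U)
    (hsupp : tsupport ⇑x ⊆ U) :
    ∃ g k : C₀(V, ℂ), π g = star (ψ x) * ψ x ∧ g = k * k ∧ star k = k ∧
      (∀ v, v ∉ s '' Function.support ⇑x → g v = 0) ∧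
      (∀ v, v ∉ s '' Function.support ⇑x → k v = 0) := by
  obtain ⟨g0, hc, hcs, hUval, hzero, hnn⟩ := exists_g0 hs x hUo hUs hsupp
  have hg_cs : HasCompactSupport fun v => ((g0 v : ℝ) : ℂ) :=
    hcs.comp_left (g := Complex.ofReal) Complex.ofReal_zero
  have hk_cs : HasCompactSupport fun v => ((Real.sqrt (g0 v) : ℝ) : ℂ) :=
    (hcs.comp_left (g := Real.sqrt) Real.sqrt_zero).comp_left
      (g := Complex.ofReal) Complex.ofReal_zero
  let g : C₀(V, ℂ) :=
    ⟨⟨fun v => ((g0 v : ℝ) : ℂ), Complex.continuous_ofReal.comp hc⟩, hg_cs.is_zero_at_infty⟩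
  let k : C₀(V, ℂ) :=
    ⟨⟨fun v => ((Real.sqrt (g0 v) : ℝ) : ℂ),
      Complex.continuous_ofReal.comp (Real.continuous_sqrt.comp hc)⟩, hk_cs.is_zero_at_infty⟩
  have hgapp : ∀ v, g v = ((g0 v : ℝ) : ℂ) := fun _ => rfl
  have hkapp : ∀ v, k v = ((Real.sqrt (g0 v) : ℝ) : ℂ) := fun _ => rfl
  have hgz : ∀ v, v ∉ s '' Function.support ⇑x → g v = 0 := by
    intro v hv; rw [hgapp, hzero v hv]; simp
  have hkz : ∀ v, v ∉ s '' Function.support ⇑x → k v = 0 := by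
    intro v hv; rw [hkapp, hzero v hv]; simp
  refine ⟨g, k, ?_, ?_, ?_, hgz, hkz⟩
  · apply hT.inner x U hUo hUs hsupp g
    · intro e hxe
      have heU : e ∈ U := hsupp (subset_closure hxe)
      rw [hgapp, hUval e heU]
      push_cast
      ring
    · exact hgz
  · ext v
    have : (k * k) v = k v * k v := rfl
    rw [this, hgapp, hkapp, ← Complex.ofReal_mul, Real.mul_self_sqrt (hnn v)]
  · ext v
    have : (star k) v = star (k v) := rfl
    rw [this, hkapp, Complex.star_def, Complex.conj_ofReal]

/-- Statement 16, first part, for `x₁` supported in an open `s`-section. -/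
lemma piece1 [T2Space V] {r s : G → V} (hs : IsLocalHomeomorph s)
    {B : Type*} [NonUnitalCStarAlgebra B]
    (ψ : C_c(G, ℂ) →ₗ[ℂ] B) (π : C₀(V, ℂ) →⋆ₙₐ[ℂ] B) (hT : IsToeplitzRep r s ψ π)
    (x₁ x₂ : C_c(G, ℂ)) {U₁ : Set G} (hU₁o : IsOpen U₁) (hU₁s : IsSSection s U₁)
    (h₁ : tsupport ⇑x₁ ⊆ U₁)
    (hdisj : s '' Function.support ⇑x₁ ∩ r '' Function.support ⇑x₂ = ∅) :
    ψ x₁ * ψ x₂ = 0 := by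
  obtain ⟨g, k, hπg, -, -, hgz, -⟩ := exists_gk r hs ψ π hT x₁ hU₁o hU₁s h₁
  have hzero : π g * ψ x₂ = 0 := by
    have hact := hT.act g x₂ 0 ?_
    · rw [map_zero] at hact; exact hact.symm
    · intro e
      by_cases hx : x₂ e = 0
      · simp [hx]
      · have hge : g (r e) = 0 := by
          apply hgz
          intro hmem
          exact Set.eq_empty_iff_forall_notMem.mp hdisj (r e)
            (Set.mem_inter hmem ⟨e, hx, rfl⟩)
        simp [hge]
  have hkey : star (ψ x₁ * ψ x₂) * (ψ x₁ * ψ x₂) = 0 := by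
    rw [star_mul]
    calc star (ψ x₂) * star (ψ x₁) * (ψ x₁ * ψ x₂)
        = star (ψ x₂) * ((star (ψ x₁) * ψ x₁) * ψ x₂) := by
          simp only [mul_assoc]
      _ = star (ψ x₂) * (π g * ψ x₂) := by rw [hπg]
      _ = 0 := by rw [hzero, mul_zero]
  exact (CStarRing.star_mul_self_eq_zero_iff _).mp hkey

/-- Statement 16, second part, for `x₁, x₂` supported in open `s`-sections. -/
lemma piece2 [T2Space V] {r s : G → V} (hs : IsLocalHomeomorph s)
    {B : Type*} [NonUnitalCStarAlgebra B]
    (ψ : C_c(G, ℂ) →ₗ[ℂ] B) (π : C₀(V, ℂ) →⋆ₙₐ[ℂ] B) (hT : IsToeplitzRep r s ψ π)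
    (x₁ x₂ : C_c(G, ℂ)) {U₁ U₂ : Set G} (hU₁o : IsOpen U₁) (hU₁s : IsSSection s U₁)
    (h₁ : tsupport ⇑x₁ ⊆ U₁) (hU₂o : IsOpen U₂) (hU₂s : IsSSection s U₂)
    (h₂ : tsupport ⇑x₂ ⊆ U₂)
    (hdisj : s '' Function.support ⇑x₁ ∩ s '' Function.support ⇑x₂ = ∅) :
    ψ x₁ * star (ψ x₂) = 0 := by
  obtain ⟨g₁, k₁, hπg₁, hg₁eq, hk₁star, hg₁z, hk₁z⟩ := exists_gk r hs ψ π hT x₁ hU₁o hU₁s h₁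
  obtain ⟨g₂, k₂, hπg₂, hg₂eq, hk₂star, hg₂z, hk₂z⟩ := exists_gk r hs ψ π hT x₂ hU₂o hU₂s h₂
  have hkg : k₂ * (g₁ * k₂) = 0 := by
    ext v
    have happ : (k₂ * (g₁ * k₂)) v = k₂ v * (g₁ v * k₂ v) := rfl
    rw [happ]
    by_cases hv : v ∈ s '' Function.support ⇑x₁
    · have hv2 : v ∉ s '' Function.support ⇑x₂ := fun h2 =>
        Set.eq_empty_iff_forall_notMem.mp hdisj v (Set.mem_inter hv h2)
      rw [hk₂z v hv2]
      simp
    · rw [hg₁z v hv]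
      simp
  have hπk₂ : star (π k₂) = π k₂ := by rw [← map_star, hk₂star]
  have hc : star (ψ x₁ * π k₂) * (ψ x₁ * π k₂) = 0 := by
    rw [star_mul, hπk₂]
    calc π k₂ * star (ψ x₁) * (ψ x₁ * π k₂)
        = π k₂ * ((star (ψ x₁) * ψ x₁) * π k₂) := by simp only [mul_assoc]
      _ = π k₂ * (π g₁ * π k₂) := by rw [hπg₁]
      _ = π (k₂ * (g₁ * k₂)) := by rw [map_mul, map_mul]
      _ = 0 := by rw [hkg, map_zero]
  have hc0 : ψ x₁ * π k₂ = 0 := (CStarRing.star_mul_self_eq_zero_iff _).mp hc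
  have hkey : (ψ x₁ * star (ψ x₂)) * star (ψ x₁ * star (ψ x₂)) = 0 := by
    have h1 : star (ψ x₁ * star (ψ x₂)) = ψ x₂ * star (ψ x₁) := by
      rw [star_mul, star_star]
    rw [h1]
    calc ψ x₁ * star (ψ x₂) * (ψ x₂ * star (ψ x₁))
        = ψ x₁ * ((star (ψ x₂) * ψ x₂) * star (ψ x₁)) := by simp only [mul_assoc]
      _ = ψ x₁ * (π g₂ * star (ψ x₁)) := by rw [hπg₂]
      _ = ψ x₁ * (π k₂ * (π k₂ * star (ψ x₁))) := by
          rw [hg₂eq, map_mul, mul_assoc]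
      _ = (ψ x₁ * π k₂) * (π k₂ * star (ψ x₁)) := by simp only [mul_assoc]
      _ = 0 := by rw [hc0, zero_mul]
  exact (CStarRing.mul_star_self_eq_zero_iff _).mp hkey

/-- Decomposition of `x ∈ C_c(E¹)` as a finite sum of functions supported in open
`s`-sections, with supports contained in that of `x`. -/
lemma decomp [T2Space G] [LocallyCompactSpace G] {s : G → V} (hs : IsLocalHomeomorph s)
    (x : C_c(G, ℂ)) :
    ∃ (n : ℕ) (y : Fin n → C_c(G, ℂ)) (Us : Fin n → Set G),
      (∀ i, IsOpen (Us i) ∧ IsSSection s (Us i) ∧ tsupport ⇑(y i) ⊆ Us i ∧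
        Function.support ⇑(y i) ⊆ Function.support ⇑x) ∧ x = ∑ i, y i := by
  classical
  have hchart : ∀ e : G, ∃ Ue : Set G, e ∈ Ue ∧ IsOpen Ue ∧ IsSSection s Ue := by
    intro e
    obtain ⟨φ, hφe, hφeq⟩ := hs e
    refine ⟨φ.source, hφe, φ.open_source, ?_⟩
    have hres : φ.source.restrict s = Subtype.val ∘ ⇑φ.toHomeomorphSourceTarget := by
      funext u
      simp [hφeq, PartialHomeomorph.toHomeomorphSourceTarget]
      rfl
    unfold IsSSection
    rw [hres]
    exact Topology.IsEmbedding.subtypeVal.comp φ.toHomeomorphSourceTarget.isEmbedding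
  choose u hu huo hus using hchart
  obtain ⟨t, ht⟩ := x.hasCompactSupport.elim_finite_subcover u huo
    (fun e _ => Set.mem_iUnion.mpr ⟨e, hu e⟩)
  set n := t.card with hn
  set en : Fin n ≃ {a // a ∈ t} := t.equivFin.symm with hen
  set Us : Fin n → Set G := fun i => u ((en i) : G) with hUs'
  have hcov : tsupport ⇑x ⊆ ⋃ i, Us i := by
    intro e he
    obtain ⟨a, ha, hmem⟩ := Set.mem_iUnion₂.mp (ht he)
    refine Set.mem_iUnion.mpr ⟨en.symm ⟨a, ha⟩, ?_⟩
    simpa [hUs', en.apply_symm_apply] using hmem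
  obtain ⟨f, hf1, hf2, hf3, hf4⟩ := exists_continuous_sum_one_of_isOpen_isCompact
    (fun i => huo _) x.hasCompactSupport hcov
  refine ⟨n, fun i =>
    ⟨⟨fun e => ((f i e : ℝ) : ℂ) * x e,
      (Complex.continuous_ofReal.comp (f i).continuous).mul (map_continuous x)⟩,
      x.hasCompactSupport.mono fun e he => right_ne_zero_of_mul he⟩, Us, ?_, ?_⟩
  · intro i
    refine ⟨huo _, hus _, ?_, fun e he => right_ne_zero_of_mul he⟩
    have hsub : Function.support (fun e => ((f i e : ℝ) : ℂ) * x e) ⊆ tsupport (f i) := by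
      intro e he
      exact subset_closure (Complex.ofReal_ne_zero.mp (left_ne_zero_of_mul he))
    exact (closure_minimal hsub (isClosed_tsupport _)).trans (hf1 i)
  · ext e
    rw [CompactlySupportedContinuousMap.sum_apply]
    show x e = ∑ i, ((f i e : ℝ) : ℂ) * x e
    rw [← Finset.sum_mul]
    by_cases hx : x e = 0
    · rw [hx, mul_zero]
    · have he : e ∈ tsupport ⇑x := subset_closure hx
      have hsum : ∑ i, f i e = 1 := by simpa using hf2 he
      have hcast : (∑ i : Fin n, ((f i e : ℝ) : ℂ)) = 1 := by
        exact_mod_cast congrArg Complex.ofReal hsum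
      rw [hcast, one_mul]

end Statement16Helpers

/-- For a Toeplitz representation `(ψ, π)`: if
`s(osupp x₁) ∩ r(osupp x₂) = ∅` then `ψ(x₁)ψ(x₂) = 0`, and if
`s(osupp x₁) ∩ s(osupp x₂) = ∅` then `ψ(x₁)ψ(x₂)* = 0`. -/
theorem statement16 {V G : Type*} [TopologicalSpace V] [TopologicalSpace G]
    [LocallyCompactSpace V] [T2Space V] [LocallyCompactSpace G] [T2Space G]
    (r s : G → V) (hr : Continuous r) (hs : IsLocalHomeomorph s)
    {B : Type*} [NonUnitalCStarAlgebra B]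
    (ψ : C_c(G, ℂ) →ₗ[ℂ] B) (π : C₀(V, ℂ) →⋆ₙₐ[ℂ] B) (hT : IsToeplitzRep r s ψ π)
    (x₁ x₂ : C_c(G, ℂ)) :
    (s '' Function.support ⇑x₁ ∩ r '' Function.support ⇑x₂ = ∅ → ψ x₁ * ψ x₂ = 0) ∧
    (s '' Function.support ⇑x₁ ∩ s '' Function.support ⇑x₂ = ∅ →
      ψ x₁ * star (ψ x₂) = 0) := by
  obtain ⟨n₁, y, Uy, hy, hxy⟩ := decomp hs x₁
  obtain ⟨n₂, z, Uz, hz, hxz⟩ := decomp hs x₂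
  constructor
  · intro hdisj
    rw [hxy, hxz, map_sum, map_sum, Finset.sum_mul_sum]
    refine Finset.sum_eq_zero fun i _ => Finset.sum_eq_zero fun j _ => ?_
    refine piece1 hs ψ π hT (y i) (z j) (hy i).1 (hy i).2.1 (hy i).2.2.1 ?_
    refine Set.subset_empty_iff.mp ?_
    rw [← hdisj]
    exact Set.inter_subset_inter (Set.image_mono (hy i).2.2.2)
      (Set.image_mono (hz j).2.2.2)
  · intro hdisj
    rw [hxy, hxz, map_sum, map_sum, star_sum, Finset.sum_mul_sum]
    refine Finset.sum_eq_zero fun i _ => Finset.sum_eq_zero fun j _ => ?_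
    refine piece2 hs ψ π hT (y i) (z j) (hy i).1 (hy i).2.1 (hy i).2.2.1
      (hz j).1 (hz j).2.1 (hz j).2.2.1 ?_
    refine Set.subset_empty_iff.mp ?_
    rw [← hdisj]
    exact Set.inter_subset_inter (Set.image_mono (hy i).2.2.2)
      (Set.image_mono (hz j).2.2.2)

end TopGraphPaper
end
end
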